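/- The point P_C = (-(μ+2)/√6, 0, 0) is an equilibrium of the system x' = -√(3/2)(μ+2)-3x, Σ₊' = -3Σ₊, z' = -z[z(√6(μ+2)x+6)-6], and the Jacobian at P_C has eigenvalues 6, -3, -3; hence P_C is a saddle. -/

import Mathlib

open Polynomial

/-! The equilibrium lies in the invariant plane `z = 0`. The first two equations are affine in
`x` and `Σ₊` with slope `-3` and do not involve `z`, while `z' = 6z - z²(√6(μ+2)x + 6)`.
So the Jacobian at every point of that plane is `diag(-3, -3, 6)`, and its characteristic
polynomial is read off the diagonal. -/

noncomputable def vectorField (μ : ℝ) (v : Fin 3 → ℝ) : Fin 3 → ℝ :=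
  ![-Real.sqrt (3/2) * (μ + 2) - 3 * v 0,
    -3 * v 1,
    -(v 2) * (v 2 * (Real.sqrt 6 * (μ + 2) * v 0 + 6) - 6)]

noncomputable def equilibriumPC (μ : ℝ) : Fin 3 → ℝ :=
  ![-(μ + 2) / Real.sqrt 6, 0, 0]

lemma Real.sqrt_three_halves : √(3 / 2) = 3 / √6 := by
  rw [eq_div_iff (by positivity), ← Real.sqrt_mul (by norm_num)]
  norm_num

lemma vectorField_equilibriumPC (μ : ℝ) : vectorField μ (equilibriumPC μ) = 0 := by
  ext i
  fin_cases i <;> simp only [vectorField, equilibriumPC, Real.sqrt_three_halves] <;> simp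
  ring

lemma hasDerivAt_vectorField_update {p : Fin 3 → ℝ} (μ : ℝ) (hp : p 2 = 0) (i j : Fin 3) :
    HasDerivAt (fun s => vectorField μ (Function.update p j s) i)
      (Matrix.diagonal ![-3, -3, 6] i j) (p j) := by
  fin_cases i <;> fin_cases j <;> simp [vectorField, Function.update, hp]
  any_goals exact hasDerivAt_const _ _
  · exact (((hasDerivAt_id' _).const_mul 3).const_sub _).congr_deriv (by ring)
  · exact ((hasDerivAt_id' _).const_mul 3).fun_neg.congr_deriv (by ring)
  · exact ((hasDerivAt_id' _).mul (((hasDerivAt_id' _).mul_const _).sub_const 6)).fun_neg.congr_deriv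
        (by ring)

lemma charpoly_diagonal_neg_three_neg_three_six :
    (Matrix.diagonal ![(-3 : ℝ), -3, 6]).charpoly = (X - C 6) * (X + C 3) * (X + C 3) := by
  rw [Matrix.charpoly_diagonal, Fin.prod_univ_three]
  simp only [Matrix.cons_val, C_neg, sub_neg_eq_add]
  ring

/-- P_C = (-(μ+2)/√6, 0, 0) is an equilibrium of the alternative system and the
Jacobian there has eigenvalues 6, -3, -3; hence P_C is a saddle (eigenvalues of
both signs). -/
theorem stmt_15 (μ : ℝ)
    (f : (Fin 3 → ℝ) → Fin 3 → ℝ)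
    (hf : ∀ v, f v = ![
      -Real.sqrt (3/2) * (μ + 2) - 3 * v 0,
      -3 * v 1,
      -(v 2) * (v 2 * (Real.sqrt 6 * (μ + 2) * v 0 + 6) - 6)])
    (p : Fin 3 → ℝ)
    (hp : p = ![-(μ + 2) / Real.sqrt 6, 0, 0])
    (J : Matrix (Fin 3) (Fin 3) ℝ)
    (hJ : ∀ i j, J i j = deriv (fun s => f (Function.update p j s) i) (p j)) :
    f p = 0 ∧ J.charpoly = (X - C 6) * (X + C 3) * (X + C 3) ∧
      ((0:ℝ) < 6 ∧ (-3:ℝ) < 0) := by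
  obtain rfl : f = vectorField μ := funext hf
  obtain rfl : p = equilibriumPC μ := hp
  have hJ_diagonal : J = Matrix.diagonal ![-3, -3, 6] := Matrix.ext fun i j =>
    (hJ i j).trans (hasDerivAt_vectorField_update μ rfl i j).deriv
  refine ⟨vectorField_equilibriumPC μ, ?_, by norm_num⟩
  rw [hJ_diagonal, charpoly_diagonal_neg_three_neg_three_six]
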